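/- arXiv:1101.0778 — 3 statements merged into one kernel-verified Lean document; each statement's English description precedes it below -/
import Mathlib

section
/- Let 0 ≤ ℓ ≤ n and ε > 0; write y = (y⁺, y⁻) ∈ ℝ^{n−ℓ} × ℝ^ℓ and h(y) = ½(‖y⁺‖² − ‖y⁻‖²). For ‖y⁺‖² = 2ε, ‖y⁻‖² < 2ε, and 0 ≤ s < 1/2, set f(s) = (1 − s²‖y⁻‖²/(2ε))^{−1/2} and define θ((y⁺,0), (0,y⁻), s) = (x⁺, x) with x⁺ = f(s)(y⁺, s y⁻) and x = f(s)(s y⁺, y⁻). Then θ is smooth in (y⁺, y⁻, s) on this domain and injective; θ((y⁺,0),(0,y⁻),0) = ((y⁺,0),(0,y⁻)); h(x⁺) = ε and ‖x‖² < 4ε for all admissible (y⁺, y⁻, s); and for 0 < s < 1/2, x = Φ_t(x⁺) with t = −log s > 0, where Φ_t(u⁺, u⁻) = (e^{−t} u⁺, e^{t} u⁻) is the flow of the negative gradient vector field −grad h = (−y⁺, y⁻). -/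
/-!
Write `c = f(s)`. The first component `c • (y⁺, s y⁻)` has energy `c²(2ε - s²‖y⁻‖²)/2`, and
`c² = 2ε / (2ε - s²‖y⁻‖²)` is exactly the normalisation making this `ε`. The second component
`(c s y⁺, c y⁻)` is the first one with `y⁺` scaled by `s = e^{-t}` and `y⁻` by `s⁻¹ = e^{t}`, i.e.
its image under the flow for time `t = -log s`. Injectivity holds because `‖y⁺‖` is fixed, so `c`
is read off from `‖x⁺.1‖`, and then `y⁺`, `y⁻`, `s` from `x⁺.1`, `x.2`, `x.1`.
-/

open Real

noncomputable section

namespace Collar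

variable {E F : Type*} [NormedAddCommGroup E] [NormedAddCommGroup F]

def radicand (ε : ℝ) (y : F) (s : ℝ) : ℝ := 1 - s ^ 2 * ‖y‖ ^ 2 / (2 * ε)

def factor (ε : ℝ) (y : F) (s : ℝ) : ℝ := (√(radicand ε y s))⁻¹

section Factor

variable {ε s : ℝ} {y : F}

theorem radicand_pos (hε : 0 < ε) (hy : ‖y‖ ^ 2 < 2 * ε) (hs : s ^ 2 ≤ 1) :
    0 < radicand ε y s := by
  rw [radicand, sub_pos, div_lt_one (by linarith)]
  exact (mul_le_of_le_one_left (sq_nonneg _) hs).trans_lt hy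

theorem factor_pos (h : 0 < radicand ε y s) : 0 < factor ε y s :=
  inv_pos.mpr (sqrt_pos.mpr h)

theorem factor_sq_mul (hε : 0 < ε) (h : 0 < radicand ε y s) :
    factor ε y s ^ 2 * (2 * ε - s ^ 2 * ‖y‖ ^ 2) = 2 * ε := by
  have hrad : 2 * ε - s ^ 2 * ‖y‖ ^ 2 = 2 * ε * radicand ε y s := by
    rw [radicand]; field_simp
  rw [factor, inv_pow, sq_sqrt h.le, hrad]
  field_simp

theorem factor_zero_right (ε : ℝ) (y : F) : factor ε y 0 = 1 := by
  simp [factor, radicand]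

end Factor

variable [NormedSpace ℝ E]

section NormedSpace

variable [NormedSpace ℝ F]

def map (ε : ℝ) (p : E × F × ℝ) : (E × F) × (E × F) :=
  ((factor ε p.2.1 p.2.2 • p.1, (factor ε p.2.1 p.2.2 * p.2.2) • p.2.1),
    ((factor ε p.2.1 p.2.2 * p.2.2) • p.1, factor ε p.2.1 p.2.2 • p.2.1))

def negGradFlow (t : ℝ) (u : E × F) : E × F := (exp (-t) • u.1, exp t • u.2)

variable {ε s : ℝ} {y : F}

theorem map_zero_right (ε : ℝ) (yp : E) (ym : F) :
    map ε (yp, ym, 0) = ((yp, 0), (0, ym)) := by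
  simp [map, factor_zero_right]

theorem injOn_map {ρ : ℝ} (hρ : ρ ≠ 0) :
    Set.InjOn (map (E := E) (F := F) ε) {p | ‖p.1‖ = ρ ∧ 0 < radicand ε p.2.1 p.2.2} := by
  rintro ⟨yp, ym, s⟩ ⟨hyp, hrad⟩ ⟨yp', ym', s'⟩ ⟨hyp', hrad'⟩ heq
  simp only [map, Prod.mk.injEq] at heq hyp hyp' hrad hrad'
  obtain ⟨⟨e1, -⟩, e3, e4⟩ := heq
  have hc := factor_pos hrad
  have hc' := factor_pos hrad'
  have hcc : factor ε ym s = factor ε ym' s' := by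
    have := congrArg norm e1
    rw [norm_smul, norm_smul, norm_of_nonneg hc.le, norm_of_nonneg hc'.le, hyp, hyp'] at this
    exact mul_right_cancel₀ hρ this
  rw [← hcc] at e1 e3 e4
  obtain rfl : yp = yp' := smul_right_injective _ hc.ne' e1
  obtain rfl : ym = ym' := smul_right_injective _ hc.ne' e4
  have hyp0 : yp ≠ 0 := by rintro rfl; exact hρ (by simpa using hyp.symm)
  obtain rfl : s = s' := mul_left_cancel₀ hc.ne' (smul_left_injective ℝ hyp0 e3)
  rfl

theorem norm_sq_map_fst_fst_sub (hε : 0 < ε) {yp : E} (hyp : ‖yp‖ ^ 2 = 2 * ε)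
    (hrad : 0 < radicand ε y s) :
    ‖(map ε (yp, y, s)).1.1‖ ^ 2 - ‖(map ε (yp, y, s)).1.2‖ ^ 2 = 2 * ε := by
  have hc := factor_pos hrad
  simp only [map, norm_smul, norm_mul, norm_of_nonneg hc.le, mul_pow, Real.norm_eq_abs, sq_abs,
    hyp]
  linear_combination factor_sq_mul hε hrad

theorem norm_sq_map_snd_add_lt (hε : 0 < ε) {yp : E} (hyp : ‖yp‖ ^ 2 = 2 * ε)
    (hy : ‖y‖ ^ 2 < 2 * ε) (hs : s ^ 2 ≤ 1 / 4) :
    ‖(map ε (yp, y, s)).2.1‖ ^ 2 + ‖(map ε (yp, y, s)).2.2‖ ^ 2 < 4 * ε := by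
  have hrad := radicand_pos hε hy (by linarith)
  have hc := factor_pos hrad
  simp only [map, norm_smul, norm_mul, norm_of_nonneg hc.le, mul_pow, Real.norm_eq_abs, sq_abs,
    hyp]
  -- `c²(2εs² + ‖y‖²) < 4ε = 2c²(2ε - s²‖y‖²)` reduces to `2εs² + ‖y‖² + 2s²‖y‖² < 4ε`
  have hgap : 0 < 4 * ε - 2 * s ^ 2 * ‖y‖ ^ 2 - 2 * ε * s ^ 2 - ‖y‖ ^ 2 := by
    nlinarith [mul_le_mul_of_nonneg_right hs (sq_nonneg ‖y‖), sq_nonneg ‖y‖]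
  nlinarith [factor_sq_mul hε hrad, mul_pos (pow_pos hc 2) hgap]

theorem negGradFlow_neg_log {s : ℝ} (hs : 0 < s) (u : E × F) :
    negGradFlow (-log s) u = (s • u.1, s⁻¹ • u.2) := by
  simp [negGradFlow, exp_neg, exp_log hs]

theorem map_snd_eq_negGradFlow (hs : 0 < s) (yp : E) :
    (map ε (yp, y, s)).2 = negGradFlow (-log s) (map ε (yp, y, s)).1 := by
  rw [negGradFlow_neg_log hs]
  simp only [map, smul_smul, Prod.mk.injEq]
  constructor <;> congr 1 <;> field_simp

end NormedSpace

theorem contDiffOn_map [InnerProductSpace ℝ F] {n : WithTop ℕ∞} (ε : ℝ) :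
    ContDiffOn ℝ n (map ε : E × F × ℝ → _) {p | 0 < radicand ε p.2.1 p.2.2} := by
  have hrad : ContDiff ℝ n fun p : E × F × ℝ => radicand ε p.2.1 p.2.2 :=
    contDiff_const.sub ((((contDiff_snd.comp contDiff_snd).pow 2).mul
      ((contDiff_norm_sq ℝ).comp (contDiff_fst.comp contDiff_snd))).div_const _)
  have hfactor : ContDiffOn ℝ n (fun p : E × F × ℝ => factor ε p.2.1 p.2.2)
      {p | 0 < radicand ε p.2.1 p.2.2} := fun p hp =>
    ((hrad.contDiffAt.sqrt hp.ne').inv (sqrt_ne_zero'.mpr hp)).contDiffWithinAt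
  have hyp : ContDiffOn ℝ n (fun p : E × F × ℝ => p.1) {p | 0 < radicand ε p.2.1 p.2.2} :=
    contDiff_fst.contDiffOn
  have hym : ContDiffOn ℝ n (fun p : E × F × ℝ => p.2.1) {p | 0 < radicand ε p.2.1 p.2.2} :=
    (contDiff_fst.comp contDiff_snd).contDiffOn
  have hs : ContDiffOn ℝ n (fun p : E × F × ℝ => p.2.2) {p | 0 < radicand ε p.2.1 p.2.2} :=
    (contDiff_snd.comp contDiff_snd).contDiffOn
  exact ((hfactor.smul hyp).prodMk ((hfactor.mul hs).smul hym)).prodMk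
    (((hfactor.mul hs).smul hyp).prodMk (hfactor.smul hym))

end Collar

end

open Collar in
theorem stmt_8_general (n ℓ : ℕ) (ε : ℝ) (hε : 0 < ε)
    (h : EuclideanSpace ℝ (Fin (n - ℓ)) × EuclideanSpace ℝ (Fin ℓ) → ℝ)
    (hdef : ∀ y, h y = (‖y.1‖ ^ 2 - ‖y.2‖ ^ 2) / 2)
    (f : EuclideanSpace ℝ (Fin ℓ) → ℝ → ℝ)
    (hf : ∀ ym s, f ym s = (Real.sqrt (1 - s ^ 2 * ‖ym‖ ^ 2 / (2 * ε)))⁻¹)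
    (θ : EuclideanSpace ℝ (Fin (n - ℓ)) × EuclideanSpace ℝ (Fin ℓ) × ℝ →
      (EuclideanSpace ℝ (Fin (n - ℓ)) × EuclideanSpace ℝ (Fin ℓ)) ×
      (EuclideanSpace ℝ (Fin (n - ℓ)) × EuclideanSpace ℝ (Fin ℓ)))
    (hθ : ∀ (yp : EuclideanSpace ℝ (Fin (n - ℓ))) (ym : EuclideanSpace ℝ (Fin ℓ)) (s : ℝ),
      θ (yp, ym, s) =
        ((f ym s • yp, (f ym s * s) • ym), ((f ym s * s) • yp, f ym s • ym)))
    (Φ : ℝ → EuclideanSpace ℝ (Fin (n - ℓ)) × EuclideanSpace ℝ (Fin ℓ) →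
      EuclideanSpace ℝ (Fin (n - ℓ)) × EuclideanSpace ℝ (Fin ℓ))
    (hΦ : ∀ t u, Φ t u = (Real.exp (-t) • u.1, Real.exp t • u.2)) :
    ContDiffOn ℝ (⊤ : ℕ∞) θ
      {p | ‖p.1‖ ^ 2 = 2 * ε ∧ ‖p.2.1‖ ^ 2 < 2 * ε ∧ 0 ≤ p.2.2 ∧ p.2.2 < 1 / 2} ∧
    Set.InjOn θ {p | ‖p.1‖ ^ 2 = 2 * ε ∧ ‖p.2.1‖ ^ 2 < 2 * ε ∧ 0 ≤ p.2.2 ∧ p.2.2 < 1 / 2} ∧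
    (∀ yp ym, ‖yp‖ ^ 2 = 2 * ε → ‖ym‖ ^ 2 < 2 * ε →
      θ (yp, ym, 0) = ((yp, 0), (0, ym))) ∧
    (∀ yp ym (s : ℝ), ‖yp‖ ^ 2 = 2 * ε → ‖ym‖ ^ 2 < 2 * ε → 0 ≤ s → s < 1 / 2 →
      h (θ (yp, ym, s)).1 = ε ∧
      ‖(θ (yp, ym, s)).2.1‖ ^ 2 + ‖(θ (yp, ym, s)).2.2‖ ^ 2 < 4 * ε) ∧
    (∀ yp ym (s : ℝ), ‖yp‖ ^ 2 = 2 * ε → ‖ym‖ ^ 2 < 2 * ε → 0 < s → s < 1 / 2 →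
      0 < -Real.log s ∧ (θ (yp, ym, s)).2 = Φ (-Real.log s) (θ (yp, ym, s)).1) := by
  obtain rfl : θ = map ε := funext fun ⟨yp, ym, s⟩ => by simp only [hθ, hf, map, factor, radicand]
  obtain rfl : Φ = negGradFlow := funext₂ hΦ
  have hs_sq {s : ℝ} (hs0 : 0 ≤ s) (hs1 : s < 1 / 2) : s ^ 2 ≤ 1 / 4 := by nlinarith
  have hsub : {p : EuclideanSpace ℝ (Fin (n - ℓ)) × EuclideanSpace ℝ (Fin ℓ) × ℝ |
      ‖p.1‖ ^ 2 = 2 * ε ∧ ‖p.2.1‖ ^ 2 < 2 * ε ∧ 0 ≤ p.2.2 ∧ p.2.2 < 1 / 2} ⊆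
      {p | ‖p.1‖ = √(2 * ε) ∧ 0 < radicand ε p.2.1 p.2.2} := fun p ⟨hyp, hym, hs0, hs1⟩ =>
    ⟨by rw [← hyp, sqrt_sq (norm_nonneg _)],
      radicand_pos hε hym (by linarith [hs_sq hs0 hs1])⟩
  refine ⟨(contDiffOn_map ε).mono fun p hp => (hsub hp).2,
    (injOn_map (sqrt_pos.mpr (by linarith)).ne').mono hsub,
    fun yp ym _ _ => map_zero_right ε yp ym,
    fun yp ym s hyp hym hs0 hs1 => ⟨?_, norm_sq_map_snd_add_lt hε hyp hym (hs_sq hs0 hs1)⟩,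
    fun yp ym s _ _ hs0 hs1 => ⟨neg_pos.mpr (log_neg hs0 (by linarith)),
      map_snd_eq_negGradFlow hs0 yp⟩⟩
  rw [hdef, norm_sq_map_fst_fst_sub hε hyp (radicand_pos hε hym (by linarith [hs_sq hs0 hs1]))]
  ring

/-- The collar map `θ((y⁺,0),(0,y⁻),s) = (f(s)(y⁺, s y⁻), f(s)(s y⁺, y⁻))`,
`f(s) = (1 - s²‖y⁻‖²/(2ε))^{-1/2}`, of the boundary stratum `S⁺ × (W⁻₀ ∩ ball)` inside the
space `Q` of pairs `(x⁺, x)` lying on a common (possibly broken) trajectory of `-grad h`. -/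
theorem stmt_8 (n ℓ : ℕ) (hℓn : ℓ ≤ n) (ε : ℝ) (hε : 0 < ε)
    (h : EuclideanSpace ℝ (Fin (n - ℓ)) × EuclideanSpace ℝ (Fin ℓ) → ℝ)
    (hdef : ∀ y, h y = (‖y.1‖ ^ 2 - ‖y.2‖ ^ 2) / 2)
    (f : EuclideanSpace ℝ (Fin ℓ) → ℝ → ℝ)
    (hf : ∀ ym s, f ym s = (Real.sqrt (1 - s ^ 2 * ‖ym‖ ^ 2 / (2 * ε)))⁻¹)
    (θ : EuclideanSpace ℝ (Fin (n - ℓ)) × EuclideanSpace ℝ (Fin ℓ) × ℝ →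
      (EuclideanSpace ℝ (Fin (n - ℓ)) × EuclideanSpace ℝ (Fin ℓ)) ×
      (EuclideanSpace ℝ (Fin (n - ℓ)) × EuclideanSpace ℝ (Fin ℓ)))
    (hθ : ∀ (yp : EuclideanSpace ℝ (Fin (n - ℓ))) (ym : EuclideanSpace ℝ (Fin ℓ)) (s : ℝ),
      θ (yp, ym, s) =
        ((f ym s • yp, (f ym s * s) • ym), ((f ym s * s) • yp, f ym s • ym)))
    (Φ : ℝ → EuclideanSpace ℝ (Fin (n - ℓ)) × EuclideanSpace ℝ (Fin ℓ) →
      EuclideanSpace ℝ (Fin (n - ℓ)) × EuclideanSpace ℝ (Fin ℓ))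
    (hΦ : ∀ t u, Φ t u = (Real.exp (-t) • u.1, Real.exp t • u.2)) :
    ContDiffOn ℝ (⊤ : ℕ∞) θ
      {p | ‖p.1‖ ^ 2 = 2 * ε ∧ ‖p.2.1‖ ^ 2 < 2 * ε ∧ 0 ≤ p.2.2 ∧ p.2.2 < 1 / 2} ∧
    Set.InjOn θ {p | ‖p.1‖ ^ 2 = 2 * ε ∧ ‖p.2.1‖ ^ 2 < 2 * ε ∧ 0 ≤ p.2.2 ∧ p.2.2 < 1 / 2} ∧
    (∀ yp ym, ‖yp‖ ^ 2 = 2 * ε → ‖ym‖ ^ 2 < 2 * ε →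
      θ (yp, ym, 0) = ((yp, 0), (0, ym))) ∧
    (∀ yp ym (s : ℝ), ‖yp‖ ^ 2 = 2 * ε → ‖ym‖ ^ 2 < 2 * ε → 0 ≤ s → s < 1 / 2 →
      h (θ (yp, ym, s)).1 = ε ∧
      ‖(θ (yp, ym, s)).2.1‖ ^ 2 + ‖(θ (yp, ym, s)).2.2‖ ^ 2 < 4 * ε) ∧
    (∀ yp ym (s : ℝ), ‖yp‖ ^ 2 = 2 * ε → ‖ym‖ ^ 2 < 2 * ε → 0 < s → s < 1 / 2 →
      0 < -Real.log s ∧ (θ (yp, ym, s)).2 = Φ (-Real.log s) (θ (yp, ym, s)).1) :=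
  stmt_8_general n ℓ ε hε h hdef f hf θ hθ Φ hΦ
end

section
/- Let M be a smooth (C^∞) finite-dimensional manifold without boundary (Hausdorff, second countable), let X be a smooth vector field on M, and let γ : ℝ → M be an integral curve of X. If γ(t) converges to a point y ∈ M as t → +∞, then X(y) = 0. -/
/-!
In the chart at `y`, the coordinate curve `c` of `γ` converges, and its velocity is the
coordinate expression of `X` along `γ`, which tends to `X y`. By the mean value inequality
`c (t + 1) - c t` is then eventually close to `X y`, while it tends to `0`.
-/

open scoped Manifold
open Filter Topology

section RealCurve

variable {E : Type*} [NormedAddCommGroup E] [NormedSpace ℝ E] {f f' : ℝ → E} {v : E}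

theorem tendsto_sub_add_one_of_tendsto_deriv
    (hderiv : ∀ᶠ t in atTop, HasDerivAt f (f' t) t) (hf' : Tendsto f' atTop (𝓝 v)) :
    Tendsto (fun t => f (t + 1) - f t) atTop (𝓝 v) := by
  rw [Metric.tendsto_atTop]
  intro ε hε
  obtain ⟨T, hT⟩ := (hderiv.and (hf'.eventually (Metric.closedBall_mem_nhds v (half_pos hε))))
    |>.exists_forall_of_atTop
  refine ⟨T, fun t ht => ?_⟩
  -- mean value inequality for `s ↦ f s - s • v`, whose derivative `f' s - v` is small
  have hmv := norm_image_sub_le_of_norm_deriv_le_segment' (a := t) (b := t + 1)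
    (f := fun s => f s - s • v) (f' := fun s => f' s - v) (C := ε / 2)
    (fun s hs => by
      simpa using
        ((hT s (ht.trans hs.1)).1.fun_sub ((hasDerivAt_id s).smul_const v)).hasDerivWithinAt)
    (fun s hs => by simpa [dist_eq_norm] using (hT s (ht.trans hs.1)).2)
    (t + 1) ⟨by linarith, le_rfl⟩
  rw [dist_eq_norm]
  calc ‖f (t + 1) - f t - v‖ = ‖(f (t + 1) - (t + 1) • v) - (f t - t • v)‖ := by
        congr 1; rw [add_smul, one_smul]; abel
    _ ≤ ε / 2 * (t + 1 - t) := hmv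
    _ < ε := by linarith

theorem eq_zero_of_tendsto_of_tendsto_deriv {a : E} (hf : Tendsto f atTop (𝓝 a))
    (hderiv : ∀ᶠ t in atTop, HasDerivAt f (f' t) t) (hf' : Tendsto f' atTop (𝓝 v)) :
    v = 0 := by
  have hshift : Tendsto (fun t => f (t + 1) - f t) atTop (𝓝 (a - a)) :=
    (hf.comp (tendsto_atTop_add_const_right atTop 1 tendsto_id)).sub hf
  rw [sub_self] at hshift
  exact tendsto_nhds_unique (tendsto_sub_add_one_of_tendsto_deriv hderiv hf') hshift

end RealCurve

section Manifold

variable {E : Type*} [NormedAddCommGroup E] [NormedSpace ℝ E]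
  {H : Type*} [TopologicalSpace H] {I : ModelWithCorners ℝ E H}
  {M : Type*} [TopologicalSpace M] [ChartedSpace H M]
  [IsManifold I 1 M] {γ : ℝ → M} {v : (x : M) → TangentSpace I x}

theorem continuousAt_tangentCoordChange_section {x₀ : M}
    (hv : ContinuousAt (fun x => (⟨x, v x⟩ : TangentBundle I M)) x₀) :
    ContinuousAt (fun x => tangentCoordChange I x x₀ x (v x)) x₀ :=
  (FiberBundle.continuousAt_section E x₀).mp hv

theorem IsMIntegralCurve.hasDerivAt_extChartAt (hγ : IsMIntegralCurve γ v) {x₀ : M} {t : ℝ}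
    (hsrc : γ t ∈ (extChartAt I x₀).source) :
    HasDerivAt (extChartAt I x₀ ∘ γ) (tangentCoordChange I (γ t) x₀ (γ t) (v (γ t))) t := by
  rw [extChartAt_source] at hsrc
  refine hasDerivAt_iff_hasFDerivAt.mpr (hasMFDerivAt_iff_hasFDerivAt.mp ?_)
  apply ((hasMFDerivAt_extChartAt (I := I) hsrc).comp t (hγ t)).congr_mfderiv
  refine ContinuousLinearMap.ext fun (a : ℝ) => ?_
  change mfderiv I I (chartAt H x₀) (γ t) (a • v (γ t))
    = a • tangentCoordChange I (γ t) x₀ (γ t) (v (γ t))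
  rw [map_smul, mfderiv_chartAt_eq_tangentCoordChange hsrc]
  rfl

end Manifold

theorem stmt_10_general {d : ℕ} {M : Type*} [TopologicalSpace M]
    [ChartedSpace (EuclideanSpace ℝ (Fin d)) M]
    [IsManifold (𝓡 d) (⊤ : ℕ∞) M]
    (X : (x : M) → TangentSpace (𝓡 d) x)
    (hX : ContMDiff (𝓡 d) (𝓡 d).tangent (⊤ : ℕ∞)
      (fun x => (⟨x, X x⟩ : TangentBundle (𝓡 d) M)))
    (γ : ℝ → M) (hγ : IsMIntegralCurve γ X) (y : M)
    (hy : Filter.Tendsto γ Filter.atTop (nhds y)) : X y = 0 := by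
  have hcoord : Tendsto (extChartAt (𝓡 d) y ∘ γ) atTop (𝓝 (extChartAt (𝓡 d) y y)) :=
    (continuousAt_extChartAt (I := 𝓡 d) y).tendsto.comp hy
  have hvel : Tendsto (fun t => tangentCoordChange (𝓡 d) (γ t) y (γ t) (X (γ t))) atTop
      (𝓝 (X y)) := by
    have hself : tangentCoordChange (𝓡 d) y y y (X y) = X y :=
      tangentCoordChange_self (mem_extChartAt_source y)
    have := (continuousAt_tangentCoordChange_section hX.continuous.continuousAt).tendsto.comp hy
    rwa [hself] at this
  have hderiv : ∀ᶠ t in atTop, HasDerivAt (extChartAt (𝓡 d) y ∘ γ)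
      (tangentCoordChange (𝓡 d) (γ t) y (γ t) (X (γ t))) t :=
    (hy.eventually_mem (extChartAt_source_mem_nhds y)).mono fun _ ht =>
      hγ.hasDerivAt_extChartAt ht
  exact eq_zero_of_tendsto_of_tendsto_deriv hcoord hderiv hvel

/-- If an integral curve of a smooth vector field on a smooth manifold converges as
`t → +∞`, then the vector field vanishes at the limit point. -/
theorem stmt_10 {d : ℕ} {M : Type*} [TopologicalSpace M] [T2Space M]
    [SecondCountableTopology M] [ChartedSpace (EuclideanSpace ℝ (Fin d)) M]
    [IsManifold (𝓡 d) (⊤ : ℕ∞) M]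
    (X : (x : M) → TangentSpace (𝓡 d) x)
    (hX : ContMDiff (𝓡 d) (𝓡 d).tangent (⊤ : ℕ∞)
      (fun x => (⟨x, X x⟩ : TangentBundle (𝓡 d) M)))
    (γ : ℝ → M) (hγ : IsMIntegralCurve γ X) (y : M)
    (hy : Filter.Tendsto γ Filter.atTop (nhds y)) : X y = 0 :=
  stmt_10_general X hX γ hγ y hy
end

section
/- Let M be a smooth (C^∞) finite-dimensional manifold without boundary (Hausdorff, second countable), let X be a smooth vector field on M, and let h : M → ℝ be a smooth function with d_x h(X(x)) < 0 for every x with X(x) ≠ 0. If γ : ℝ → M is an integral curve of X with X(γ(0)) ≠ 0, then X(γ(t)) ≠ 0 for every t ∈ ℝ, and the function t ↦ h(γ(t)) is strictly decreasing on ℝ. -/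
/-!
A zero of `X` is a rest point, so by uniqueness of integral curves an integral curve meeting a
zero of `X` is constant; hence `X` never vanishes along `γ`. By the chain rule the derivative of
`h ∘ γ` at `t` is `d_{γ t} h (X (γ t)) < 0`, so `h ∘ γ` is strictly decreasing.
-/

open scoped Manifold

section IntegralCurve

variable {E : Type*} [NormedAddCommGroup E] [NormedSpace ℝ E]
  {H : Type*} [TopologicalSpace H] {I : ModelWithCorners ℝ E H}
  {M : Type*} [TopologicalSpace M] [ChartedSpace H M]
  {v : (x : M) → TangentSpace I x} {γ : ℝ → M}

theorem IsMIntegralCurve.apply_ne_zero [IsManifold I 1 M] [T2Space M] [BoundarylessManifold I M]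
    (hv : ContMDiff I I.tangent 1 (fun x ↦ (⟨x, v x⟩ : TangentBundle I M)))
    (hγ : IsMIntegralCurve γ v) {t₀ : ℝ} (ht₀ : v (γ t₀) ≠ 0) (t : ℝ) : v (γ t) ≠ 0 := by
  intro ht
  have hγ_const : γ = fun _ ↦ γ t :=
    isMIntegralCurve_Ioo_eq_of_contMDiff_boundaryless hv hγ (isMIntegralCurve_const ht) rfl
  exact ht₀ (by rwa [hγ_const])

theorem IsMIntegralCurve.hasDerivAt_comp {f : M → ℝ} (hγ : IsMIntegralCurve γ v) {t : ℝ}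
    (hf : MDifferentiableAt I 𝓘(ℝ, ℝ) f (γ t)) :
    HasDerivAt (f ∘ γ) (show ℝ from mfderiv I 𝓘(ℝ, ℝ) f (γ t) (v (γ t))) t := by
  have hcomp := hf.hasMFDerivAt.comp t (hγ t)
  rw [hasMFDerivAt_iff_hasFDerivAt] at hcomp
  rw [hasDerivAt_iff_hasFDerivAt]
  refine hcomp.congr_fderiv (ContinuousLinearMap.ext_ring ?_)
  change mfderiv I 𝓘(ℝ, ℝ) f (γ t) ((1 : ℝ) • v (γ t))
    = (1 : ℝ) * (show ℝ from mfderiv I 𝓘(ℝ, ℝ) f (γ t) (v (γ t)))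
  rw [one_smul, one_mul]

theorem IsMIntegralCurve.strictAnti_comp {f : M → ℝ} (hγ : IsMIntegralCurve γ v)
    (hf : MDifferentiable I 𝓘(ℝ, ℝ) f)
    (hf_neg : ∀ t, (show ℝ from mfderiv I 𝓘(ℝ, ℝ) f (γ t) (v (γ t))) < 0) :
    StrictAnti (f ∘ γ) :=
  strictAnti_of_hasDerivAt_neg (fun t ↦ hγ.hasDerivAt_comp (hf (γ t))) hf_neg

end IntegralCurve

theorem stmt_14_general {d : ℕ} {M : Type*} [TopologicalSpace M] [T2Space M]
    [ChartedSpace (EuclideanSpace ℝ (Fin d)) M]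
    [IsManifold (𝓡 d) (⊤ : ℕ∞) M]
    (X : (x : M) → TangentSpace (𝓡 d) x)
    (hX : ContMDiff (𝓡 d) (𝓡 d).tangent (⊤ : ℕ∞)
      (fun x => (⟨x, X x⟩ : TangentBundle (𝓡 d) M)))
    (h : M → ℝ) (hh : ContMDiff (𝓡 d) 𝓘(ℝ, ℝ) (⊤ : ℕ∞) h)
    (hlyap : ∀ x : M, X x ≠ 0 → (show ℝ from mfderiv (𝓡 d) 𝓘(ℝ, ℝ) h x (X x)) < 0)
    (γ : ℝ → M) (hγ : IsMIntegralCurve γ X) (h0 : X (γ 0) ≠ 0) :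
    (∀ t : ℝ, X (γ t) ≠ 0) ∧ StrictAnti (fun t => h (γ t)) := by
  have hX_ne : ∀ t : ℝ, X (γ t) ≠ 0 :=
    hγ.apply_ne_zero (hX.of_le (by exact_mod_cast le_top)) h0
  exact ⟨hX_ne, hγ.strictAnti_comp (hh.mdifferentiable (by simp)) fun t ↦ hlyap _ (hX_ne t)⟩

/-- A strict Lyapunov function for a gradient-like vector field: along an integral curve
through a non-rest point, the vector field never vanishes and `h` strictly decreases. -/
theorem stmt_14 {d : ℕ} {M : Type*} [TopologicalSpace M] [T2Space M]
    [SecondCountableTopology M]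
    [ChartedSpace (EuclideanSpace ℝ (Fin d)) M]
    [IsManifold (𝓡 d) (⊤ : ℕ∞) M]
    (X : (x : M) → TangentSpace (𝓡 d) x)
    (hX : ContMDiff (𝓡 d) (𝓡 d).tangent (⊤ : ℕ∞)
      (fun x => (⟨x, X x⟩ : TangentBundle (𝓡 d) M)))
    (h : M → ℝ) (hh : ContMDiff (𝓡 d) 𝓘(ℝ, ℝ) (⊤ : ℕ∞) h)
    (hlyap : ∀ x : M, X x ≠ 0 → (show ℝ from mfderiv (𝓡 d) 𝓘(ℝ, ℝ) h x (X x)) < 0)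
    (γ : ℝ → M) (hγ : IsMIntegralCurve γ X) (h0 : X (γ 0) ≠ 0) :
    (∀ t : ℝ, X (γ t) ≠ 0) ∧ StrictAnti (fun t => h (γ t)) :=
  stmt_14_general X hX h hh hlyap γ hγ h0
end
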